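/- arXiv:1201.5990 — 3 statements merged into one kernel-verified Lean document; each statement's English description precedes it below -/
import Mathlib

section
/- Let g : ℝˢ × ℝˢ → ℝ be twice continuously differentiable and let ℓ : ℝˢ → ℝ be differentiable. Suppose that for every θ ∈ ℝˢ the gradient of ℓ at θ equals the partial gradient of g with respect to its first argument evaluated at (θ, θ), i.e. ∇ℓ(θ) = ∂₁g(θ, θ̄)|_{θ̄=θ}. Then the Hessian of ℓ satisfies, for every θ, ∇²ℓ(θ) = ∂²g/∂θ∂θᵀ(θ, θ̄)|_{θ̄=θ} + ∂²g/∂θ̄∂θᵀ(θ, θ̄)|_{θ̄=θ}. (This is the general form of the Oakes identity: the observed information matrix is J(θ) = −(∂²Q/∂θ∂θᵀ + ∂²Q/∂θ̄∂θᵀ)|_{θ̄=θ}.) -/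
/-! Write `Φ(θ, θ̄) = ∂₁g(θ, θ̄)`, which is differentiable because `g` is `C²`. The score identity
says `∇ℓ(θ) = Φ(θ, θ)`, and the derivative of a differentiable function along the diagonal is the
sum of its two partial derivatives there; these are the two blocks on the right. -/

open ContinuousLinearMap

variable {𝕜 : Type*} [NontriviallyNormedField 𝕜]
  {E : Type*} [NormedAddCommGroup E] [NormedSpace 𝕜 E]
  {F : Type*} [NormedAddCommGroup F] [NormedSpace 𝕜 F]
  {G : Type*} [NormedAddCommGroup G] [NormedSpace 𝕜 G]

theorem fderiv_comp_prodMk_left {g : E × F → G} {x : E} {y : F}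
    (hg : DifferentiableAt 𝕜 g (x, y)) :
    fderiv 𝕜 (fun x' => g (x', y)) x = (fderiv 𝕜 g (x, y)).comp (inl 𝕜 E F) :=
  (hg.hasFDerivAt.comp x (hasFDerivAt_prodMk_left x y)).fderiv

theorem fderiv_comp_prodMk_right {g : E × F → G} {x : E} {y : F}
    (hg : DifferentiableAt 𝕜 g (x, y)) :
    fderiv 𝕜 (fun y' => g (x, y')) y = (fderiv 𝕜 g (x, y)).comp (inr 𝕜 E F) :=
  (hg.hasFDerivAt.comp y (hasFDerivAt_prodMk_right x y)).fderiv

theorem fderiv_comp_diag {Φ : E × E → F} {x : E} (hΦ : DifferentiableAt 𝕜 Φ (x, x)) :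
    fderiv 𝕜 (fun y => Φ (y, y)) x
      = fderiv 𝕜 (fun y => Φ (y, x)) x + fderiv 𝕜 (fun y => Φ (x, y)) x := by
  have hdiag : fderiv 𝕜 (fun y => Φ (y, y)) x
      = (fderiv 𝕜 Φ (x, x)).comp ((ContinuousLinearMap.id 𝕜 E).prod (ContinuousLinearMap.id 𝕜 E)) :=
    (hΦ.hasFDerivAt.comp (g := Φ) (f := fun y => (y, y)) x
      ((hasFDerivAt_id x).prodMk (hasFDerivAt_id x))).fderiv
  rw [hdiag, fderiv_comp_prodMk_left hΦ, fderiv_comp_prodMk_right hΦ, ← comp_add]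
  congr 1
  ext v <;> simp

theorem ContDiff.differentiable_fderiv_comp_prodMk_left {g : E × F → G} (hg : ContDiff 𝕜 2 g) :
    Differentiable 𝕜 fun p : E × F => fderiv 𝕜 (fun x => g (x, p.2)) p.1 := by
  have hg' : Differentiable 𝕜 g := hg.differentiable two_ne_zero
  have hpartial : (fun p : E × F => fderiv 𝕜 (fun x => g (x, p.2)) p.1)
      = fun p => (fderiv 𝕜 g p).comp (inl 𝕜 E F) :=
    funext fun p => fderiv_comp_prodMk_left (hg' p)
  rw [hpartial]
  exact ((compL 𝕜 E (E × F) G).flip (inl 𝕜 E F)).differentiable.comp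
    ((hg.fderiv_right (m := 1) le_rfl).differentiable one_ne_zero)

theorem oakes_identity_general_general (s : ℕ)
    (g : (Fin s → ℝ) × (Fin s → ℝ) → ℝ) (ℓ : (Fin s → ℝ) → ℝ)
    (hg : ContDiff ℝ 2 g)
    (hscore : ∀ θ : Fin s → ℝ, fderiv ℝ ℓ θ = fderiv ℝ (fun x => g (x, θ)) θ) :
    ∀ θ : Fin s → ℝ,
      fderiv ℝ (fun x => fderiv ℝ ℓ x) θ
        = fderiv ℝ (fun x => fderiv ℝ (fun x' => g (x', θ)) x) θ
          + fderiv ℝ (fun xb => fderiv ℝ (fun x' => g (x', xb)) θ) θ := by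
  intro θ
  set Φ := fun p : (Fin s → ℝ) × (Fin s → ℝ) => fderiv ℝ (fun x => g (x, p.2)) p.1
  have hscore_diag : (fun x => fderiv ℝ ℓ x) = fun x => Φ (x, x) := funext hscore
  rw [hscore_diag]
  exact fderiv_comp_diag (hg.differentiable_fderiv_comp_prodMk_left (θ, θ))

/-- **Oakes' identity, general form.**  If `g(θ, θ̄)` plays the role of the EM quantity
`Q(θ|θ̄)` and `ℓ` is the observed-data log-likelihood, and the EM score identity
`∇ℓ(θ) = ∂₁g(θ, θ̄)|_{θ̄ = θ}` holds for every `θ`, then the Hessian of `ℓ` is the sum of the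
two second-derivative blocks of `g` evaluated on the diagonal `θ̄ = θ`. -/
theorem oakes_identity_general (s : ℕ)
    (g : (Fin s → ℝ) × (Fin s → ℝ) → ℝ) (ℓ : (Fin s → ℝ) → ℝ)
    (hg : ContDiff ℝ 2 g) (hℓ : Differentiable ℝ ℓ)
    (hscore : ∀ θ : Fin s → ℝ, fderiv ℝ ℓ θ = fderiv ℝ (fun x => g (x, θ)) θ) :
    ∀ θ : Fin s → ℝ,
      fderiv ℝ (fun x => fderiv ℝ ℓ x) θ
        = fderiv ℝ (fun x => fderiv ℝ (fun x' => g (x', θ)) x) θ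
          + fderiv ℝ (fun xb => fderiv ℝ (fun x' => g (x', xb)) θ) θ :=
  oakes_identity_general_general s g ℓ hg hscore
end

section
/- Let U be a nonempty finite set and for each u ∈ U let p_u : ℝˢ → ℝ be a differentiable function with p_u(θ) > 0 for all θ. Define ℓ(θ) = log (Σ_{u∈U} p_u(θ)) and Q(θ | θ̄) = Σ_{u∈U} (p_u(θ̄) / Σ_{u'∈U} p_{u'}(θ̄)) · log p_u(θ). Then for every θ, the gradient of Q(· | θ̄) with respect to its first argument, evaluated at θ̄ = θ, equals the gradient of ℓ at θ: ∂Q(θ|θ̄)/∂θ |_{θ̄=θ} = ∇ℓ(θ). -/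
open Finset

section

variable {ι E : Type*} [Fintype ι] [NormedAddCommGroup E] [NormedSpace ℝ E]
  {f : ι → E → ℝ} {f' : ι → E →L[ℝ] ℝ} {x : E}

theorem HasFDerivAt.sum_mul_log (c : ι → ℝ) (hf : ∀ i, HasFDerivAt (f i) (f' i) x)
    (hx : ∀ i, f i x ≠ 0) :
    HasFDerivAt (fun y => ∑ i, c i * Real.log (f i y)) (∑ i, (c i / f i x) • f' i) x := by
  refine HasFDerivAt.fun_sum fun i _ => ?_
  simpa only [smul_smul, div_eq_mul_inv] using ((hf i).log (hx i)).const_mul (c i)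

/-- With posterior weights `f i x / ∑ f`, each weight divided by `f i x` is the same constant
`(∑ f)⁻¹`, so the weighted score collapses to the score of the total `∑ f`. -/
theorem HasFDerivAt.sum_posterior_mul_log (hf : ∀ i, HasFDerivAt (f i) (f' i) x)
    (hx : ∀ i, f i x ≠ 0) :
    HasFDerivAt (fun y => ∑ i, (f i x / ∑ j, f j x) * Real.log (f i y))
      ((∑ j, f j x)⁻¹ • ∑ i, f' i) x := by
  convert HasFDerivAt.sum_mul_log _ hf hx using 1
  rw [smul_sum]
  exact sum_congr rfl fun i _ => by rw [div_div_cancel_left' (hx i)]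

theorem HasFDerivAt.log_sum (hf : ∀ i, HasFDerivAt (f i) (f' i) x)
    (hx : ∑ i, f i x ≠ 0) :
    HasFDerivAt (fun y => Real.log (∑ i, f i y)) ((∑ i, f i x)⁻¹ • ∑ i, f' i) x :=
  (HasFDerivAt.fun_sum fun i _ => hf i).log hx

end

/-- **EM score identity for a finite latent variable.**  With `p u θ` the complete-data
likelihood of latent value `u` together with the observed data, `ℓ(θ) = log ∑ᵤ pᵤ(θ)` the
observed-data log-likelihood, and `Q(θ|θ̄) = ∑ᵤ (pᵤ(θ̄)/∑ᵤ' pᵤ'(θ̄)) log pᵤ(θ)` the EM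
expected complete-data log-likelihood, the gradient of `Q(·|θ̄)` at `θ̄ = θ` equals the
gradient of `ℓ` at `θ`. -/
theorem em_score_identity (s : ℕ) (U : Type*) [Fintype U] [Nonempty U]
    (p : U → (Fin s → ℝ) → ℝ)
    (hdiff : ∀ u, Differentiable ℝ (p u))
    (hpos : ∀ u θ, 0 < p u θ) :
    ∀ θ : Fin s → ℝ,
      fderiv ℝ (fun x => ∑ u, (p u θ / ∑ u', p u' θ) * Real.log (p u x)) θ
        = fderiv ℝ (fun x => Real.log (∑ u, p u x)) θ := by
  intro θ
  have hp : ∀ u, HasFDerivAt (p u) (fderiv ℝ (p u) θ) θ := fun u => (hdiff u θ).hasFDerivAt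
  have hsum : ∑ u, p u θ ≠ 0 := (sum_pos (fun u _ => hpos u θ) univ_nonempty).ne'
  rw [(HasFDerivAt.sum_posterior_mul_log hp fun u => (hpos u θ).ne').fderiv,
    (HasFDerivAt.log_sum hp hsum).fderiv]
end

section
/- Let U be a nonempty finite set and for each u ∈ U let p_u : ℝˢ → ℝ be twice continuously differentiable with p_u(θ) > 0 for all θ. Define ℓ(θ) = log (Σ_{u∈U} p_u(θ)) and Q(θ | θ̄) = Σ_{u∈U} (p_u(θ̄)/Σ_{u'} p_{u'}(θ̄)) · log p_u(θ). Then the Hessian of ℓ satisfies the Oakes identity: for every θ, ∇²ℓ(θ) = ∂²Q(θ|θ̄)/∂θ∂θᵀ |_{θ̄=θ} + ∂²Q(θ|θ̄)/∂θ̄∂θᵀ |_{θ̄=θ}; equivalently the observed information matrix is J(θ) = −(∂²Q/∂θ∂θᵀ + ∂²Q/∂θ̄∂θᵀ)|_{θ̄=θ}. -/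
/-!
Write `w(a)ᵤ = pᵤ(a) / ∑ᵤ' pᵤ'(a)` for the posterior weights. The gradient of `Q(·|a)` at `b` is
`G(a, b) = ∑ᵤ w(a)ᵤ ∇pᵤ(b) / pᵤ(b)`, and Fisher's identity says `∇ℓ(θ) = G(θ, θ)`. Differentiating
the diagonal of the jointly differentiable map `G` gives `∇²ℓ(θ) = ∂_b G(θ, θ) + ∂_a G(θ, θ)`,
which is Oakes' identity.
-/

open Function

section Diagonal

variable {𝕜 E F : Type*} [NontriviallyNormedField 𝕜] [NormedAddCommGroup E] [NormedSpace 𝕜 E]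
  [NormedAddCommGroup F] [NormedSpace 𝕜 F]

theorem fderiv_diag_eq_add {f : E → E → F} {x : E}
    (hf : DifferentiableAt 𝕜 (uncurry f) (x, x)) :
    fderiv 𝕜 (fun y => f y y) x = fderiv 𝕜 (f x) x + fderiv 𝕜 (fun y => f y x) x := by
  set D := fderiv 𝕜 (uncurry f) (x, x)
  have hdiag : HasFDerivAt (fun y => f y y) (D.comp ((ContinuousLinearMap.id 𝕜 E).prod
      (ContinuousLinearMap.id 𝕜 E))) x :=
    hf.hasFDerivAt.comp (f := fun y => (y, y)) x ((hasFDerivAt_id x).prodMk (hasFDerivAt_id x))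
  have hright : HasFDerivAt (f x) (D.comp (.inr 𝕜 E E)) x :=
    hf.hasFDerivAt.comp (f := fun y => (x, y)) x (hasFDerivAt_prodMk_right x x)
  have hleft : HasFDerivAt (fun y => f y x) (D.comp (.inl 𝕜 E E)) x :=
    hf.hasFDerivAt.comp (f := fun y => (y, x)) x (hasFDerivAt_prodMk_left x x)
  rw [hdiag.fderiv, hright.fderiv, hleft.fderiv, add_comm]
  ext v
  exact (D.comp_inl_add_comp_inr (v, v)).symm

end Diagonal

namespace LatentModel

variable {U E : Type*} [Fintype U] [NormedAddCommGroup E] [NormedSpace ℝ E]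

noncomputable def posterior (p : U → E → ℝ) (a : E) (u : U) : ℝ :=
  p u a / ∑ u', p u' a

noncomputable def emQ (p : U → E → ℝ) (a x : E) : ℝ :=
  ∑ u, posterior p a u * Real.log (p u x)

theorem hasFDerivAt_emQ {p : U → E → ℝ} (a : E) {b : E}
    (hd : ∀ u, DifferentiableAt ℝ (p u) b) (hp : ∀ u, p u b ≠ 0) :
    HasFDerivAt (emQ p a) (∑ u, posterior p a u • (p u b)⁻¹ • fderiv ℝ (p u) b) b :=
  HasFDerivAt.fun_sum fun u _ => (((hd u).hasFDerivAt).log (hp u)).const_mul _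

theorem fderiv_log_sum_eq_fderiv_emQ {p : U → E → ℝ} {x : E}
    (hd : ∀ u, DifferentiableAt ℝ (p u) x) (hp : ∀ u, p u x ≠ 0) (hS : ∑ u, p u x ≠ 0) :
    fderiv ℝ (fun x' => Real.log (∑ u, p u x')) x = fderiv ℝ (emQ p x) x := by
  have hsum : HasFDerivAt (fun x' => ∑ u, p u x') (∑ u, fderiv ℝ (p u) x) x :=
    HasFDerivAt.fun_sum fun u _ => (hd u).hasFDerivAt
  rw [(hsum.log hS).fderiv, (hasFDerivAt_emQ x hd hp).fderiv, Finset.smul_sum]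
  refine Finset.sum_congr rfl fun u _ => ?_
  rw [smul_smul, posterior, div_mul_eq_mul_div, mul_inv_cancel₀ (hp u), one_div]

theorem differentiable_posterior {p : U → E → ℝ} (hd : ∀ u, Differentiable ℝ (p u))
    (hS : ∀ x, ∑ u, p u x ≠ 0) (u : U) :
    Differentiable ℝ fun a => posterior p a u :=
  fun a => by
    simpa only [posterior, div_eq_mul_inv] using
      (hd u a).fun_mul ((DifferentiableAt.fun_sum fun u' _ => hd u' a).fun_inv (hS a))

theorem differentiable_uncurry_fderiv_emQ {p : U → E → ℝ} (hsmooth : ∀ u, ContDiff ℝ 2 (p u))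
    (hp : ∀ u x, p u x ≠ 0) (hS : ∀ x, ∑ u, p u x ≠ 0) :
    Differentiable ℝ (uncurry fun a b => fderiv ℝ (emQ p a) b) := by
  have hd : ∀ u, Differentiable ℝ (p u) := fun u => (hsmooth u).differentiable two_ne_zero
  have hscore : ∀ u, Differentiable ℝ fun b => (p u b)⁻¹ • fderiv ℝ (p u) b := fun u =>
    ((hd u).inv (hp u)).smul
      (((hsmooth u).fderiv_right (m := 1) (by norm_num)).differentiable one_ne_zero)
  have hG : uncurry (fun a b => fderiv ℝ (emQ p a) b)
      = fun q : E × E => ∑ u, posterior p q.1 u • (p u q.2)⁻¹ • fderiv ℝ (p u) q.2 :=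
    funext fun q => (hasFDerivAt_emQ q.1 (fun u => hd u q.2) (fun u => hp u q.2)).fderiv
  rw [hG]
  exact Differentiable.fun_sum fun u _ =>
    ((differentiable_posterior hd hS u).comp differentiable_fst).smul
      ((hscore u).comp differentiable_snd)

end LatentModel

open LatentModel

/-- **Oakes' identity for a finite latent variable model.**  With `p u θ` the complete-data
likelihood of latent value `u` together with the observed data, `ℓ(θ) = log ∑ᵤ pᵤ(θ)` the
observed-data log-likelihood, and `Q(θ|θ̄) = ∑ᵤ (pᵤ(θ̄)/∑ᵤ' pᵤ'(θ̄)) log pᵤ(θ)` the EM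
expected complete-data log-likelihood, the Hessian of `ℓ` at `θ` equals
`∂²Q/∂θ∂θᵀ|_{θ̄=θ} + ∂²Q/∂θ̄∂θᵀ|_{θ̄=θ}`; equivalently the observed information matrix is
`J(θ) = −(∂²Q/∂θ∂θᵀ + ∂²Q/∂θ̄∂θᵀ)|_{θ̄=θ}`. -/
theorem em_oakes_identity (s : ℕ) (U : Type*) [Fintype U] [Nonempty U]
    (p : U → (Fin s → ℝ) → ℝ)
    (hsmooth : ∀ u, ContDiff ℝ 2 (p u))
    (hpos : ∀ u θ, 0 < p u θ) :
    ∀ θ : Fin s → ℝ,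
      fderiv ℝ (fun x => fderiv ℝ (fun x' => Real.log (∑ u, p u x')) x) θ
        = fderiv ℝ (fun x =>
            fderiv ℝ (fun x' => ∑ u, (p u θ / ∑ u', p u' θ) * Real.log (p u x')) x) θ
          + fderiv ℝ (fun xb =>
              fderiv ℝ (fun x' => ∑ u, (p u xb / ∑ u', p u' xb) * Real.log (p u x')) θ) θ := by
  intro θ
  have hp : ∀ u x, p u x ≠ 0 := fun u x => (hpos u x).ne'
  have hS : ∀ x, ∑ u, p u x ≠ 0 := fun x =>
    (Finset.sum_pos (fun u _ => hpos u x) Finset.univ_nonempty).ne'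
  have hFisher : (fun x => fderiv ℝ (fun x' => Real.log (∑ u, p u x')) x)
      = fun x => fderiv ℝ (emQ p x) x := funext fun x =>
    fderiv_log_sum_eq_fderiv_emQ (fun u => ((hsmooth u).differentiable two_ne_zero) x)
      (fun u => hp u x) (hS x)
  rw [hFisher]
  exact fderiv_diag_eq_add (differentiable_uncurry_fderiv_emQ hsmooth hp hS _)
end
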